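/- arXiv:2008.09089 — 5 statements merged into one kernel-verified Lean document; each statement's English description precedes it below -/
import Mathlib

section
/- Nash stationarity (sufficiency direction) for impartial pairwise comparison dynamics: if x lies in the simplex Δ = {x ∈ R^n : x ≥ 0, Σ_i x_i = m} and x is a Nash equilibrium of the payoff vector f (i.e., x_i > 0 implies f_i(x) = max_j f_j(x)), then for the dynamics ẋ_i = Σ_j (x_j ρ(f_i(x) − f_j(x)) − x_i ρ(f_j(x) − f_i(x))) with ρ(α) > 0 for α > 0 and ρ(α) = 0 for α ≤ 0, one has ẋ_i = 0 for all i. -/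
/-- Nash stationarity (sufficiency): at a Nash equilibrium of `f`, all
components of ẋ vanish under impartial pairwise comparison dynamics. -/
theorem nash_stationarity_sufficiency (n : ℕ) (hn : 2 ≤ n) (m : ℝ) (hm : 0 < m)
    (f : (Fin n → ℝ) → Fin n → ℝ) (ρ : ℝ → ℝ)
    (hρpos : ∀ α : ℝ, 0 < α → 0 < ρ α) (hρzero : ∀ α : ℝ, α ≤ 0 → ρ α = 0)
    (x : Fin n → ℝ) (hx0 : ∀ i, 0 ≤ x i) (hxm : ∑ i, x i = m)
    (hNash : ∀ i, 0 < x i → ∀ j, f x j ≤ f x i) :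
    ∀ i, ∑ j, (x j * ρ (f x i - f x j) - x i * ρ (f x j - f x i)) = 0 := by
  intro i
  apply Finset.sum_eq_zero
  intro j _
  have h1 : x j * ρ (f x i - f x j) = 0 := by
    rcases eq_or_lt_of_le (hx0 j) with h | h
    · rw [← h, zero_mul]
    · rw [hρzero _ (by linarith [hNash j h i]), mul_zero]
  have h2 : x i * ρ (f x j - f x i) = 0 := by
    rcases eq_or_lt_of_le (hx0 i) with h | h
    · rw [← h, zero_mul]
    · rw [hρzero _ (by linarith [hNash i h j]), mul_zero]
  rw [h1, h2, sub_zero]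
end

section
/- Nash stationarity (necessity direction) for impartial pairwise comparison dynamics: if x lies in the simplex Δ = {x ∈ R^n : x ≥ 0, Σ_i x_i = m} with m > 0 and x is not a Nash equilibrium of f (i.e., there exists z with x_z > 0 and f_z(x) < max_j f_j(x)), then the vector with components ẋ_i = Σ_j (x_j ρ(f_i(x) − f_j(x)) − x_i ρ(f_j(x) − f_i(x))) is nonzero; specifically ẋ_k > 0 for any k achieving max_j f_j(x). -/
/-- Nash stationarity (necessity): if `x` is not a Nash equilibrium of `f`,
then ẋ_k > 0 for any strategy `k` achieving the maximal payoff. -/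
theorem nash_stationarity_necessity (n : ℕ) (hn : 2 ≤ n) (m : ℝ) (hm : 0 < m)
    (f : (Fin n → ℝ) → Fin n → ℝ) (ρ : ℝ → ℝ)
    (hρpos : ∀ α : ℝ, 0 < α → 0 < ρ α) (hρzero : ∀ α : ℝ, α ≤ 0 → ρ α = 0)
    (x : Fin n → ℝ) (hx0 : ∀ i, 0 ≤ x i) (hxm : ∑ i, x i = m)
    (hNotNash : ∃ z j, 0 < x z ∧ f x z < f x j) :
    ∀ k, (∀ j, f x j ≤ f x k) →
      0 < ∑ j, (x j * ρ (f x k - f x j) - x k * ρ (f x j - f x k)) := by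
  intro k hk
  obtain ⟨z, j0, hz, hzj⟩ := hNotNash
  have hρnn : ∀ α : ℝ, 0 ≤ ρ α := by
    intro α
    rcases le_or_gt α 0 with h | h
    · rw [hρzero _ h]
    · exact le_of_lt (hρpos _ h)
  have hsum : ∀ j : Fin n, x j * ρ (f x k - f x j) - x k * ρ (f x j - f x k)
      = x j * ρ (f x k - f x j) := by
    intro j
    rw [hρzero (f x j - f x k) (by linarith [hk j])]
    ring
  simp_rw [hsum]
  refine Finset.sum_pos' (fun j _ => mul_nonneg (hx0 j) (hρnn _))
    ⟨z, Finset.mem_univ z, mul_pos hz (hρpos _ (by linarith [hk j0]))⟩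
end

section
/- The Lyapunov function is positive off equilibria (necessity): with V as above and ρ, φ additionally strictly positive on (0, ∞) and continuous, if (x, μ) ∈ Δ_P × Δ_D is such that either x is not a Nash equilibrium of a = f^μ(x, μ) or μ is not a Nash equilibrium of b = g(x), then V(x, μ) > 0. -/
lemma integ_nonneg (ρ : ℝ → ℝ) (hρc : Continuous ρ)
    (hρ0 : ∀ τ : ℝ, τ ≤ 0 → ρ τ = 0)
    (hρpos : ∀ τ : ℝ, 0 < τ → 0 < ρ τ) (c : ℝ) :
    0 ≤ ∫ τ in (0:ℝ)..c, ρ τ := by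
  rcases le_or_gt 0 c with h | h
  · apply intervalIntegral.integral_nonneg h
    intro u _
    rcases le_or_gt u 0 with hu | hu
    · rw [hρ0 u hu]
    · exact (hρpos u hu).le
  · have : ∫ τ in (0:ℝ)..c, ρ τ = ∫ τ in (0:ℝ)..c, (0:ℝ) := by
      apply intervalIntegral.integral_congr
      intro u hu
      rw [Set.uIcc_of_ge h.le] at hu
      exact hρ0 u hu.2
    rw [this, intervalIntegral.integral_zero]

lemma integ_pos (ρ : ℝ → ℝ) (hρc : Continuous ρ)
    (hρ0 : ∀ τ : ℝ, τ ≤ 0 → ρ τ = 0)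
    (hρpos : ∀ τ : ℝ, 0 < τ → 0 < ρ τ) (c : ℝ) (hc : 0 < c) :
    0 < ∫ τ in (0:ℝ)..c, ρ τ := by
  apply intervalIntegral.intervalIntegral_pos_of_pos_on
    (hρc.intervalIntegrable 0 c)
    (fun u hu => hρpos u hu.1) hc

/-- The Lyapunov function is positive off equilibria: if either `x` fails the
Nash condition for `a` or `μ` fails the Nash condition for `b`, then
`V(x, μ) > 0`. -/
theorem lyapunov_pos_off_equilibria (n q : ℕ) (mP mD : ℝ)
    (hmP : 0 < mP) (hmD : 0 < mD)
    (x : Fin n → ℝ) (μ : Fin (q + 1) → ℝ)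
    (hx : ∀ i, 0 ≤ x i) (hxm : ∑ i, x i = mP)
    (hμ : ∀ k, 0 ≤ μ k) (hμm : ∑ k, μ k = mD)
    (a : Fin n → ℝ) (b : Fin (q + 1) → ℝ)
    (ρ φ : ℝ → ℝ) (hρc : Continuous ρ) (hφc : Continuous φ)
    (hρ0 : ∀ τ : ℝ, τ ≤ 0 → ρ τ = 0) (hφ0 : ∀ τ : ℝ, τ ≤ 0 → φ τ = 0)
    (hρpos : ∀ τ : ℝ, 0 < τ → 0 < ρ τ) (hφpos : ∀ τ : ℝ, 0 < τ → 0 < φ τ)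
    (hNot : (∃ v y, 0 < x v ∧ a v < a y) ∨ (∃ w z, 0 < μ w ∧ b w < b z)) :
    0 < (∑ j, ∑ i, x i * ∫ τ in (0:ℝ)..(a j - a i), ρ τ) +
        (∑ l, ∑ k, μ k * ∫ τ in (0:ℝ)..(b l - b k), φ τ) := by
  have hA : 0 ≤ ∑ j, ∑ i, x i * ∫ τ in (0:ℝ)..(a j - a i), ρ τ :=
    Finset.sum_nonneg fun j _ => Finset.sum_nonneg fun i _ =>
      mul_nonneg (hx i) (integ_nonneg ρ hρc hρ0 hρpos _)
  have hB : 0 ≤ ∑ l, ∑ k, μ k * ∫ τ in (0:ℝ)..(b l - b k), φ τ :=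
    Finset.sum_nonneg fun l _ => Finset.sum_nonneg fun k _ =>
      mul_nonneg (hμ k) (integ_nonneg φ hφc hφ0 hφpos _)
  rcases hNot with ⟨v, y, hv, hvy⟩ | ⟨w, z, hw, hwz⟩
  · have hApos : 0 < ∑ j, ∑ i, x i * ∫ τ in (0:ℝ)..(a j - a i), ρ τ := by
      apply Finset.sum_pos'
        (fun j _ => Finset.sum_nonneg fun i _ =>
          mul_nonneg (hx i) (integ_nonneg ρ hρc hρ0 hρpos _))
      refine ⟨y, Finset.mem_univ y, ?_⟩
      apply Finset.sum_pos'
        (fun i _ => mul_nonneg (hx i) (integ_nonneg ρ hρc hρ0 hρpos _))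
      exact ⟨v, Finset.mem_univ v,
        mul_pos hv (integ_pos ρ hρc hρ0 hρpos _ (by linarith))⟩
    linarith
  · have hBpos : 0 < ∑ l, ∑ k, μ k * ∫ τ in (0:ℝ)..(b l - b k), φ τ := by
      apply Finset.sum_pos'
        (fun l _ => Finset.sum_nonneg fun k _ =>
          mul_nonneg (hμ k) (integ_nonneg φ hφc hφ0 hφpos _))
      refine ⟨z, Finset.mem_univ z, ?_⟩
      apply Finset.sum_pos'
        (fun k _ => mul_nonneg (hμ k) (integ_nonneg φ hφc hφ0 hφpos _))
      exact ⟨w, Finset.mem_univ w,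
        mul_pos hw (integ_pos φ hφc hφ0 hφpos _ (by linarith))⟩
    linarith
end

section
/- The descent term Γ_P^⊤ ẋ is nonpositive: with a ∈ R^n, ρ as above, ρ_i^j = ρ(a_j − a_i), P_i^j = ∫_0^{a_j − a_i} ρ, ẋ_y = Σ_i (x_i ρ_i^y − x_y ρ_y^i), and x ≥ 0 componentwise, the quantity Σ_y ẋ_y Σ_j P_y^j = Σ_{y,i} x_i ρ_i^y Σ_j (P_y^j − P_i^j) is ≤ 0. -/
lemma P_mono (ρ : ℝ → ℝ) (hρc : Continuous ρ) (hρnn : ∀ τ, 0 ≤ ρ τ)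
    {s t : ℝ} (hst : s ≤ t) :
    (∫ τ in (0:ℝ)..s, ρ τ) ≤ ∫ τ in (0:ℝ)..t, ρ τ := by
  have h := intervalIntegral.integral_add_adjacent_intervals
    (hρc.intervalIntegrable (μ := MeasureTheory.volume) 0 s) (hρc.intervalIntegrable s t)
  have h2 : 0 ≤ ∫ τ in s..t, ρ τ :=
    intervalIntegral.integral_nonneg hst (fun u _ => hρnn u)
  linarith

/-- The descent term `Γ_P^⊤ ẋ` is nonpositive. -/
theorem descent_term_nonpos (n : ℕ) (x a : Fin n → ℝ) (hx : ∀ i, 0 ≤ x i)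
    (ρ : ℝ → ℝ) (hρc : Continuous ρ) (hρ0 : ∀ τ : ℝ, τ ≤ 0 → ρ τ = 0)
    (hρpos : ∀ τ : ℝ, 0 < τ → 0 < ρ τ) :
    ∑ y, ∑ i, x i * ρ (a y - a i) *
        (∑ j, ((∫ τ in (0:ℝ)..(a j - a y), ρ τ) -
          ∫ τ in (0:ℝ)..(a j - a i), ρ τ)) ≤ 0 := by
  have hρnn : ∀ τ, 0 ≤ ρ τ := by
    intro τ
    rcases le_or_gt τ 0 with h | h
    · rw [hρ0 τ h]
    · exact (hρpos τ h).le
  apply Finset.sum_nonpos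
  intro y _
  apply Finset.sum_nonpos
  intro i _
  rcases eq_or_lt_of_le (hρnn (a y - a i)) with h | h
  · rw [← h]; ring_nf; simp
  · have hlt : a i < a y := by
      by_contra hc
      push_neg at hc
      have := hρ0 (a y - a i) (by linarith)
      linarith
    have hsum : (∑ j, ((∫ τ in (0:ℝ)..(a j - a y), ρ τ) -
          ∫ τ in (0:ℝ)..(a j - a i), ρ τ)) ≤ 0 := by
      apply Finset.sum_nonpos
      intro j _
      have := P_mono ρ hρc hρnn (s := a j - a y) (t := a j - a i) (by linarith)
      linarith
    exact mul_nonpos_of_nonneg_of_nonpos (mul_nonneg (hx i) h.le) hsum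
end

section
/- Vanishing of the descent term characterizes Nash: in the setting of the previous statement, with additionally Σ_i x_i = m > 0, the quantity Σ_{y,i} x_i ρ_i^y Σ_j (P_y^j − P_i^j) equals 0 if and only if x is a Nash equilibrium of a (i.e., x_i > 0 ⟹ a_i = max_j a_j). -/
/-- The descent term vanishes iff `x` is a Nash equilibrium of `a`. -/
theorem descent_term_zero_iff_nash (n : ℕ) (m : ℝ) (hm : 0 < m)
    (x a : Fin n → ℝ) (hx : ∀ i, 0 ≤ x i) (hxm : ∑ i, x i = m)
    (ρ : ℝ → ℝ) (hρc : Continuous ρ) (hρ0 : ∀ τ : ℝ, τ ≤ 0 → ρ τ = 0)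
    (hρpos : ∀ τ : ℝ, 0 < τ → 0 < ρ τ) :
    (∑ y, ∑ i, x i * ρ (a y - a i) *
        (∑ j, ((∫ τ in (0:ℝ)..(a j - a y), ρ τ) -
          ∫ τ in (0:ℝ)..(a j - a i), ρ τ)) = 0) ↔
      (∀ i, 0 < x i → ∀ j, a j ≤ a i) := by
  have hρnn : ∀ τ, 0 ≤ ρ τ := fun τ => by
    rcases le_or_gt τ 0 with h | h
    · exact (hρ0 τ h).ge
    · exact (hρpos τ h).le
  have hInt : ∀ s t : ℝ, IntervalIntegrable ρ MeasureTheory.volume s t :=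
    fun s t => hρc.intervalIntegrable s t
  have hmono : ∀ s t : ℝ, s ≤ t →
      (∫ τ in (0:ℝ)..s, ρ τ) ≤ ∫ τ in (0:ℝ)..t, ρ τ := by
    intro s t hst
    have h1 := intervalIntegral.integral_add_adjacent_intervals (hInt 0 s) (hInt s t)
    have h2 : 0 ≤ ∫ τ in s..t, ρ τ :=
      intervalIntegral.integral_nonneg hst (fun u _ => hρnn u)
    linarith
  have hpos : ∀ t : ℝ, 0 < t → 0 < ∫ τ in (0:ℝ)..t, ρ τ := by
    intro t ht
    exact intervalIntegral.intervalIntegral_pos_of_pos_on (hInt 0 t)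
      (fun u hu => hρpos u hu.1) ht
  have hterm : ∀ y i : Fin n, x i * ρ (a y - a i) *
      (∑ j, ((∫ τ in (0:ℝ)..(a j - a y), ρ τ) -
        ∫ τ in (0:ℝ)..(a j - a i), ρ τ)) ≤ 0 := by
    intro y i
    rcases le_or_gt (a y) (a i) with h | h
    · rw [hρ0 _ (by linarith)]; simp
    · have hsum : (∑ j, ((∫ τ in (0:ℝ)..(a j - a y), ρ τ) -
          ∫ τ in (0:ℝ)..(a j - a i), ρ τ)) ≤ 0 :=
        Finset.sum_nonpos fun j _ => by
          have := hmono (a j - a y) (a j - a i) (by linarith)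
          linarith
      exact mul_nonpos_of_nonneg_of_nonpos (mul_nonneg (hx i) (hρnn _)) hsum
  constructor
  · intro hS
    by_contra hnot
    push_neg at hnot
    obtain ⟨v, hv, w, hw⟩ := hnot
    -- get a maximizer y of a
    have hne : (Finset.univ : Finset (Fin n)).Nonempty := ⟨v, Finset.mem_univ v⟩
    obtain ⟨y, -, hy⟩ := Finset.exists_max_image Finset.univ a hne
    have hya : ∀ j, a j ≤ a y := fun j => hy j (Finset.mem_univ j)
    have hvy : a v < a y := lt_of_lt_of_le hw (hya w)
    -- the (y, v) term is strictly negative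
    have hstrict : x v * ρ (a y - a v) *
        (∑ j, ((∫ τ in (0:ℝ)..(a j - a y), ρ τ) -
          ∫ τ in (0:ℝ)..(a j - a v), ρ τ)) < 0 := by
      have hρv : 0 < ρ (a y - a v) := hρpos _ (by linarith)
      have hsum : (∑ j, ((∫ τ in (0:ℝ)..(a j - a y), ρ τ) -
          ∫ τ in (0:ℝ)..(a j - a v), ρ τ)) < 0 := by
        have hyy : ((∫ τ in (0:ℝ)..(a y - a y), ρ τ) -
            ∫ τ in (0:ℝ)..(a y - a v), ρ τ) < 0 := by
          have h1 : 0 < ∫ τ in (0:ℝ)..(a y - a v), ρ τ := hpos _ (by linarith)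
          have h2 : (∫ τ in (0:ℝ)..(a y - a y), ρ τ) = 0 := by
            simp
          linarith
        calc (∑ j, ((∫ τ in (0:ℝ)..(a j - a y), ρ τ) -
            ∫ τ in (0:ℝ)..(a j - a v), ρ τ))
            < ∑ _j : Fin n, (0:ℝ) := by
              apply Finset.sum_lt_sum
              · intro j _
                have := hmono (a j - a y) (a j - a v) (by have := hya j; linarith)
                linarith
              · exact ⟨y, Finset.mem_univ y, hyy⟩
          _ = 0 := by simp
      exact mul_neg_of_pos_of_neg (mul_pos hv hρv) hsum
    have hlt : (∑ y', ∑ i, x i * ρ (a y' - a i) *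
        (∑ j, ((∫ τ in (0:ℝ)..(a j - a y'), ρ τ) -
          ∫ τ in (0:ℝ)..(a j - a i), ρ τ))) < 0 := by
      calc (∑ y', ∑ i, x i * ρ (a y' - a i) *
          (∑ j, ((∫ τ in (0:ℝ)..(a j - a y'), ρ τ) -
            ∫ τ in (0:ℝ)..(a j - a i), ρ τ)))
          < ∑ _y' : Fin n, (0:ℝ) := by
            apply Finset.sum_lt_sum
            · intro y' _
              exact Finset.sum_nonpos fun i _ => hterm y' i
            · refine ⟨y, Finset.mem_univ y, ?_⟩
              calc (∑ i, x i * ρ (a y - a i) *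
                  (∑ j, ((∫ τ in (0:ℝ)..(a j - a y), ρ τ) -
                    ∫ τ in (0:ℝ)..(a j - a i), ρ τ)))
                  < ∑ _i : Fin n, (0:ℝ) := by
                    apply Finset.sum_lt_sum
                    · intro i _; exact hterm y i
                    · exact ⟨v, Finset.mem_univ v, hstrict⟩
                _ = 0 := by simp
        _ = 0 := by simp
    linarith [hS, hlt]
  · intro hNash
    apply Finset.sum_eq_zero
    intro y _
    apply Finset.sum_eq_zero
    intro i _
    rcases (hx i).lt_or_eq with h | h
    · rw [hρ0 (a y - a i) (by have := hNash i h y; linarith)]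
      ring
    · rw [← h]; ring
end
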